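/- Let N ≥ 1 and m ≥ 1 be integers. For all z, ξ ∈ 𝔹_N, applying the composition of differential operators (|E_ξ+m|²−Δ_ξ)∘(|E_ξ+(m−1)|²−Δ_ξ)∘⋯∘(|E_ξ+0|²−Δ_ξ) (acting in the variable ξ) to the function ξ ↦ (1−|ξ|²)/|1−⟨z,ξ⟩|² yields the same value at ξ as applying (|E_z|²−Δ_z) (acting in the variable z) to the function z ↦ (m!)²·(1−|z|²)^{m+1}/|1−⟨z,ξ⟩|^{2(m+1)}. -/

import Mathlib

open MeasureTheory Metric Complex ComplexConjugate Finset
open scoped ENNReal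

noncomputable section

/-- `ℂ^N` with its (product) Lebesgue measure; `EuclideanSpace ℂ (Fin N)` is definitionally
`Fin N → ℂ`. -/
instance (N : ℕ) : MeasureSpace (EuclideanSpace ℂ (Fin N)) :=
  { volume := (volume : Measure (Fin N → ℂ)).map (WithLp.toLp 2) }

variable {N : ℕ}

/-- Hermitian inner product `⟨z,w⟩ = Σ z_j conj(w_j)`. -/
def hinner (z w : EuclideanSpace ℂ (Fin N)) : ℂ := ∑ j, z j * conj (w j)

/-- Lebesgue measure on `ℂ^N` normalized so that the unit ball has measure 1. -/
def volB (N : ℕ) : Measure (EuclideanSpace ℂ (Fin N)) :=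
  (volume (ball (0 : EuclideanSpace ℂ (Fin N)) 1))⁻¹ • volume

/-- The Berezin transform of `u`. -/
def berezin (u : EuclideanSpace ℂ (Fin N) → ℂ) (z : EuclideanSpace ℂ (Fin N)) : ℂ :=
  (((1 - ‖z‖ ^ 2) ^ (N + 1) : ℝ) : ℂ) *
    ∫ ξ in ball (0 : EuclideanSpace ℂ (Fin N)) 1,
      u ξ / ((‖1 - hinner z ξ‖ ^ (2 * (N + 1)) : ℝ) : ℂ) ∂(volB N)

/-- Pluriharmonic on the unit ball: sum of a holomorphic and an anti-holomorphic function. -/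
def Pluriharmonic (h : EuclideanSpace ℂ (Fin N) → ℂ) : Prop :=
  ∃ f g : EuclideanSpace ℂ (Fin N) → ℂ,
    DifferentiableOn ℂ f (ball 0 1) ∧ DifferentiableOn ℂ g (ball 0 1) ∧
      ∀ z ∈ ball (0 : EuclideanSpace ℂ (Fin N)) 1, h z = f z + conj (g z)

/-- `B(u)` has finite rank: it is a finite sum `Σ f_j conj(g_j)` with `f_j, g_j` holomorphic. -/
def FiniteRankBerezin (u : EuclideanSpace ℂ (Fin N) → ℂ) : Prop :=
  ∃ (n : ℕ) (f g : Fin n → EuclideanSpace ℂ (Fin N) → ℂ),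
    (∀ j, DifferentiableOn ℂ (f j) (ball 0 1)) ∧
    (∀ j, DifferentiableOn ℂ (g j) (ball 0 1)) ∧
    ∀ z ∈ ball (0 : EuclideanSpace ℂ (Fin N)) 1,
      berezin u z = ∑ j, f j z * conj (g j z)

/-- Wirtinger derivative `∂/∂z_j`. -/
def wdz (j : Fin N) (f : EuclideanSpace ℂ (Fin N) → ℂ) (z : EuclideanSpace ℂ (Fin N)) : ℂ :=
  (1 / 2 : ℂ) * (fderiv ℝ f z (EuclideanSpace.single j 1)
    - Complex.I * fderiv ℝ f z (EuclideanSpace.single j Complex.I))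

/-- Wirtinger derivative `∂/∂conj(z_j)`. -/
def wdzbar (j : Fin N) (f : EuclideanSpace ℂ (Fin N) → ℂ) (z : EuclideanSpace ℂ (Fin N)) : ℂ :=
  (1 / 2 : ℂ) * (fderiv ℝ f z (EuclideanSpace.single j 1)
    + Complex.I * fderiv ℝ f z (EuclideanSpace.single j Complex.I))

/-- The radial operator `E = Σ z_j ∂/∂z_j`. -/
def Eop (f : EuclideanSpace ℂ (Fin N) → ℂ) (z : EuclideanSpace ℂ (Fin N)) : ℂ :=
  ∑ j, z j * wdz j f z

/-- The radial operator `Ē = Σ conj(z_j) ∂/∂conj(z_j)`. -/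
def Ebarop (f : EuclideanSpace ℂ (Fin N) → ℂ) (z : EuclideanSpace ℂ (Fin N)) : ℂ :=
  ∑ j, conj (z j) * wdzbar j f z

/-- The Laplacian `Δ = Σ ∂²/(∂z_j ∂conj(z_j))`. -/
def lapOp (f : EuclideanSpace ℂ (Fin N) → ℂ) (z : EuclideanSpace ℂ (Fin N)) : ℂ :=
  ∑ j, wdz j (wdzbar j f) z

/-- The operator `|E+s|² − Δ = (E+s)∘(Ē+s) − Δ`. -/
def stepOp (s : ℝ) (f : EuclideanSpace ℂ (Fin N) → ℂ) : EuclideanSpace ℂ (Fin N) → ℂ :=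
  fun z => (Eop (fun w => Ebarop f w + (s : ℂ) * f w) z
      + (s : ℂ) * (Ebarop f z + (s : ℂ) * f z)) - lapOp f z

/-- The composition `(|E+m|²−Δ)∘(|E+(m−1)|²−Δ)∘⋯∘(|E+0|²−Δ)`. -/
def iterOp : ℕ → (EuclideanSpace ℂ (Fin N) → ℂ) → (EuclideanSpace ℂ (Fin N) → ℂ)
  | 0 => stepOp 0
  | (m + 1) => fun f => stepOp (m + 1) (iterOp m f)

/-- The invariant Laplacian `Δ̃ = (1−|z|²)(Δ − |E|²)`. -/
def invLap (f : EuclideanSpace ℂ (Fin N) → ℂ) (z : EuclideanSpace ℂ (Fin N)) : ℂ :=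
  (((1 - ‖z‖ ^ 2 : ℝ)) : ℂ) * (lapOp f z - Eop (Ebarop f) z)

/-- The operator `c − Δ̃` (a single factor of `p_m(Δ̃)`). -/
def factorOp (c : ℂ) (f : EuclideanSpace ℂ (Fin N) → ℂ) : EuclideanSpace ℂ (Fin N) → ℂ :=
  fun z => c * f z - invLap f z

/-- The product of operators `∏_{j=0}^{m} (j(j−N) − Δ̃)`. -/
def prodOp (N : ℕ) : ℕ → (EuclideanSpace ℂ (Fin N) → ℂ) → (EuclideanSpace ℂ (Fin N) → ℂ)
  | 0 => factorOp ((0 : ℂ) * ((0 : ℂ) - (N : ℂ)))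
  | (m + 1) => fun f => factorOp (((m : ℂ) + 1) * (((m : ℂ) + 1) - (N : ℂ))) (prodOp N m f)

open Classical in
/-- The Möbius automorphism `φ_w` of the unit ball interchanging `0` and `w`. -/
def mobius (w z : EuclideanSpace ℂ (Fin N)) : EuclideanSpace ℂ (Fin N) :=
  ((1 - hinner z w)⁻¹ : ℂ) •
    (w - (if w = 0 then 0 else (hinner z w / hinner w w) • w)
      - ((Real.sqrt (1 - ‖w‖ ^ 2) : ℝ) : ℂ) •
        (z - (if w = 0 then 0 else (hinner z w / hinner w w) • w)))


/-!
In the variable `w` every function that occurs is a linear combination of the monomials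
`(1 - |w|²)^p (1 - ⟨w,ζ⟩)^a (1 - ⟨ζ,w⟩)^b` (`ζ` a point of the ball), on which `E`, `Ē` and `Δ`
act by index shifts. Hence `|E+σ|² - Δ` sends such a monomial to five monomials, and three of
the five coefficients carry a factor `p+a+σ` or `p+b+σ`. The kernel is the monomial `(1,-1,-1)`
with `ζ = z`, and the step with `σ = k` only meets monomials with `p + a = p + b = -k`, so the
composition stays a combination of two monomials with explicit coefficients. The right-hand
side is `|E|² - Δ` applied to the single monomial `(m+1,-(m+1),-(m+1))` with `ζ = ξ`, where the
same cancellation occurs, and the two results agree after exchanging the roles of `z` and `ξ`.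
-/

open Filter Topology

lemma ContDiffAt.zpow_of_ne_zero {E : Type*} [NormedAddCommGroup E] [NormedSpace ℝ E]
    {f : E → ℂ} {x : E} {n : WithTop ℕ∞} (hf : ContDiffAt ℝ n f x) (h : f x ≠ 0) :
    ∀ p : ℤ, ContDiffAt ℝ n (fun x => f x ^ p) x
  | (k : ℕ) => by simpa only [zpow_natCast] using hf.pow k
  | .negSucc k => by
    simp only [zpow_negSucc]; exact (hf.pow (k + 1)).inv (pow_ne_zero _ h)

section Wirtinger

variable {N : ℕ}
local notation "ℂᴺ" => EuclideanSpace ℂ (Fin N)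

variable {f g : EuclideanSpace ℂ (Fin N) → ℂ} {w : EuclideanSpace ℂ (Fin N)} (j : Fin N)

lemma HasFDerivAt.wdz_eq {L : ℂᴺ →L[ℝ] ℂ} (h : HasFDerivAt f L w) :
    wdz j f w = (1 / 2 : ℂ) * (L (EuclideanSpace.single j 1)
      - I * L (EuclideanSpace.single j I)) := by
  rw [wdz, h.fderiv]

lemma HasFDerivAt.wdzbar_eq {L : ℂᴺ →L[ℝ] ℂ} (h : HasFDerivAt f L w) :
    wdzbar j f w = (1 / 2 : ℂ) * (L (EuclideanSpace.single j 1)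
      + I * L (EuclideanSpace.single j I)) := by
  rw [wdzbar, h.fderiv]

lemma wdz_congr (h : f =ᶠ[𝓝 w] g) : wdz j f w = wdz j g w := by
  rw [wdz, wdz, h.fderiv_eq]

lemma wdzbar_congr (h : f =ᶠ[𝓝 w] g) : wdzbar j f w = wdzbar j g w := by
  rw [wdzbar, wdzbar, h.fderiv_eq]

lemma wdz_add (hf : DifferentiableAt ℝ f w) (hg : DifferentiableAt ℝ g w) :
    wdz j (fun w => f w + g w) w = wdz j f w + wdz j g w := by
  rw [(hf.hasFDerivAt.fun_add hg.hasFDerivAt).wdz_eq, hf.hasFDerivAt.wdz_eq, hg.hasFDerivAt.wdz_eq]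
  simp only [add_apply]; ring

lemma wdzbar_add (hf : DifferentiableAt ℝ f w) (hg : DifferentiableAt ℝ g w) :
    wdzbar j (fun w => f w + g w) w = wdzbar j f w + wdzbar j g w := by
  rw [(hf.hasFDerivAt.fun_add hg.hasFDerivAt).wdzbar_eq, hf.hasFDerivAt.wdzbar_eq,
    hg.hasFDerivAt.wdzbar_eq]
  simp only [add_apply]; ring

lemma wdz_mul (hf : DifferentiableAt ℝ f w) (hg : DifferentiableAt ℝ g w) :
    wdz j (fun w => f w * g w) w = f w * wdz j g w + g w * wdz j f w := by
  rw [(hf.hasFDerivAt.fun_mul hg.hasFDerivAt).wdz_eq, hf.hasFDerivAt.wdz_eq, hg.hasFDerivAt.wdz_eq]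
  simp only [add_apply, smul_apply, smul_eq_mul]; ring

lemma wdzbar_mul (hf : DifferentiableAt ℝ f w) (hg : DifferentiableAt ℝ g w) :
    wdzbar j (fun w => f w * g w) w = f w * wdzbar j g w + g w * wdzbar j f w := by
  rw [(hf.hasFDerivAt.fun_mul hg.hasFDerivAt).wdzbar_eq, hf.hasFDerivAt.wdzbar_eq,
    hg.hasFDerivAt.wdzbar_eq]
  simp only [add_apply, smul_apply, smul_eq_mul]; ring

lemma wdz_const_mul (c : ℂ) (hf : DifferentiableAt ℝ f w) :
    wdz j (fun w => c * f w) w = c * wdz j f w := by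
  rw [(hf.hasFDerivAt.const_mul c).wdz_eq, hf.hasFDerivAt.wdz_eq]
  simp only [smul_apply, smul_eq_mul]; ring

lemma wdzbar_const_mul (c : ℂ) (hf : DifferentiableAt ℝ f w) :
    wdzbar j (fun w => c * f w) w = c * wdzbar j f w := by
  rw [(hf.hasFDerivAt.const_mul c).wdzbar_eq, hf.hasFDerivAt.wdzbar_eq]
  simp only [smul_apply, smul_eq_mul]; ring

lemma DifferentiableAt.complex_zpow (hf : DifferentiableAt ℝ f w) (h0 : f w ≠ 0) (p : ℤ) :
    DifferentiableAt ℝ (fun w => f w ^ p) w :=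
  ((hasDerivAt_zpow p (f w) (.inl h0)).comp_hasFDerivAt w hf.hasFDerivAt).differentiableAt

lemma wdz_zpow (hf : DifferentiableAt ℝ f w) (h0 : f w ≠ 0) (p : ℤ) :
    wdz j (fun w => f w ^ p) w = p * f w ^ (p - 1) * wdz j f w := by
  have h : HasFDerivAt (fun w => f w ^ p) _ w :=
    (hasDerivAt_zpow p (f w) (.inl h0)).comp_hasFDerivAt w hf.hasFDerivAt
  rw [h.wdz_eq, hf.hasFDerivAt.wdz_eq]
  simp only [smul_apply, smul_eq_mul]; ring

lemma wdzbar_zpow (hf : DifferentiableAt ℝ f w) (h0 : f w ≠ 0) (p : ℤ) :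
    wdzbar j (fun w => f w ^ p) w = p * f w ^ (p - 1) * wdzbar j f w := by
  have h : HasFDerivAt (fun w => f w ^ p) _ w :=
    (hasDerivAt_zpow p (f w) (.inl h0)).comp_hasFDerivAt w hf.hasFDerivAt
  rw [h.wdzbar_eq, hf.hasFDerivAt.wdzbar_eq]
  simp only [smul_apply, smul_eq_mul]; ring

lemma wdz_coord : wdz j (fun w : ℂᴺ => w j) w = 1 := by
  have h : HasFDerivAt (fun w : ℂᴺ => w j)
      ((EuclideanSpace.proj j : ℂᴺ →L[ℂ] ℂ).restrictScalars ℝ) w :=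
    ((EuclideanSpace.proj j : ℂᴺ →L[ℂ] ℂ).restrictScalars ℝ).hasFDerivAt
  rw [h.wdz_eq]
  simp only [ContinuousLinearMap.coe_restrictScalars', PiLp.proj_apply, PiLp.single_eq_same,
    I_mul_I]
  norm_num

end Wirtinger

section Operators

variable {N : ℕ} {f g : EuclideanSpace ℂ (Fin N) → ℂ} {w : EuclideanSpace ℂ (Fin N)}

lemma Eop_congr (h : f =ᶠ[𝓝 w] g) : Eop f w = Eop g w :=
  Finset.sum_congr rfl fun j _ => by rw [wdz_congr j h]

lemma Ebarop_congr (h : f =ᶠ[𝓝 w] g) : Ebarop f w = Ebarop g w :=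
  Finset.sum_congr rfl fun j _ => by rw [wdzbar_congr j h]

lemma lapOp_congr (h : f =ᶠ[𝓝 w] g) : lapOp f w = lapOp g w :=
  Finset.sum_congr rfl fun j _ =>
    wdz_congr j (h.eventuallyEq_nhds.mono fun _ hy => wdzbar_congr j hy)

lemma stepOp_congr (σ : ℝ) (h : f =ᶠ[𝓝 w] g) : stepOp σ f w = stepOp σ g w := by
  have h' : (fun y => Ebarop f y + σ * f y) =ᶠ[𝓝 w] fun y => Ebarop g y + σ * g y :=
    h.eventuallyEq_nhds.mono fun _ hy => by simp only [Ebarop_congr hy, hy.eq_of_nhds]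
  simp only [stepOp, Eop_congr h', Ebarop_congr h, lapOp_congr h, h.eq_of_nhds]

lemma stepOp_zero (f : EuclideanSpace ℂ (Fin N) → ℂ) (w : EuclideanSpace ℂ (Fin N)) :
    stepOp 0 f w = Eop (Ebarop f) w - lapOp f w := by
  simp [stepOp]

lemma Eop_add (hf : DifferentiableAt ℝ f w) (hg : DifferentiableAt ℝ g w) :
    Eop (fun w => f w + g w) w = Eop f w + Eop g w := by
  simp only [Eop, wdz_add _ hf hg, mul_add, Finset.sum_add_distrib]

lemma Eop_const_mul (c : ℂ) (hf : DifferentiableAt ℝ f w) :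
    Eop (fun w => c * f w) w = c * Eop f w := by
  simp only [Eop, wdz_const_mul _ c hf, Finset.mul_sum, mul_left_comm]

lemma Ebarop_add (hf : DifferentiableAt ℝ f w) (hg : DifferentiableAt ℝ g w) :
    Ebarop (fun w => f w + g w) w = Ebarop f w + Ebarop g w := by
  simp only [Ebarop, wdzbar_add _ hf hg, mul_add, Finset.sum_add_distrib]

lemma Ebarop_const_mul (c : ℂ) (hf : DifferentiableAt ℝ f w) :
    Ebarop (fun w => c * f w) w = c * Ebarop f w := by
  simp only [Ebarop, wdzbar_const_mul _ c hf, Finset.mul_sum, mul_left_comm]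

lemma ContDiffAt.differentiableAt_wdzbar (hf : ContDiffAt ℝ 2 f w) (j : Fin N) :
    DifferentiableAt ℝ (wdzbar j f) w := by
  have hf' : DifferentiableAt ℝ (fderiv ℝ f) w :=
    (hf.fderiv_right (m := 1) le_rfl).differentiableAt one_ne_zero
  unfold wdzbar
  fun_prop

lemma ContDiffAt.differentiableAt_Ebarop (hf : ContDiffAt ℝ 2 f w) :
    DifferentiableAt ℝ (Ebarop f) w := by
  unfold Ebarop
  have := hf.differentiableAt_wdzbar
  fun_prop

lemma ContDiffAt.eventually_differentiableAt (hf : ContDiffAt ℝ 2 f w) :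
    ∀ᶠ y in 𝓝 w, DifferentiableAt ℝ f y :=
  (hf.eventually (by simp)).mono fun _ hy => hy.differentiableAt (by norm_num)

lemma lapOp_add (hf : ContDiffAt ℝ 2 f w) (hg : ContDiffAt ℝ 2 g w) :
    lapOp (fun w => f w + g w) w = lapOp f w + lapOp g w := by
  simp only [lapOp, ← Finset.sum_add_distrib]
  refine Finset.sum_congr rfl fun j _ => ?_
  have h : wdzbar j (fun w => f w + g w) =ᶠ[𝓝 w] fun y => wdzbar j f y + wdzbar j g y :=
    (hf.eventually_differentiableAt.and hg.eventually_differentiableAt).mono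
      fun _ hy => wdzbar_add j hy.1 hy.2
  rw [wdz_congr j h, wdz_add j (hf.differentiableAt_wdzbar j) (hg.differentiableAt_wdzbar j)]

lemma lapOp_const_mul (c : ℂ) (hf : ContDiffAt ℝ 2 f w) :
    lapOp (fun w => c * f w) w = c * lapOp f w := by
  simp only [lapOp, Finset.mul_sum]
  refine Finset.sum_congr rfl fun j _ => ?_
  have h : wdzbar j (fun w => c * f w) =ᶠ[𝓝 w] fun y => c * wdzbar j f y :=
    hf.eventually_differentiableAt.mono fun _ hy => wdzbar_const_mul j c hy
  rw [wdz_congr j h, wdz_const_mul j c (hf.differentiableAt_wdzbar j)]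

lemma stepOp_add (σ : ℝ) (hf : ContDiffAt ℝ 2 f w) (hg : ContDiffAt ℝ 2 g w) :
    stepOp σ (fun w => f w + g w) w = stepOp σ f w + stepOp σ g w := by
  have h : (fun y => Ebarop (fun w => f w + g w) y + σ * (f y + g y)) =ᶠ[𝓝 w]
      fun y => (Ebarop f y + σ * f y) + (Ebarop g y + σ * g y) :=
    (hf.eventually_differentiableAt.and hg.eventually_differentiableAt).mono
      fun _ hy => by simp only [Ebarop_add hy.1 hy.2]; ring
  have hf' : DifferentiableAt ℝ (fun y => Ebarop f y + σ * f y) w :=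
    hf.differentiableAt_Ebarop.add ((hf.differentiableAt (by norm_num)).const_mul _)
  have hg' : DifferentiableAt ℝ (fun y => Ebarop g y + σ * g y) w :=
    hg.differentiableAt_Ebarop.add ((hg.differentiableAt (by norm_num)).const_mul _)
  simp only [stepOp]
  rw [Eop_congr h, Eop_add hf' hg', Ebarop_add (hf.differentiableAt (by norm_num))
    (hg.differentiableAt (by norm_num)), lapOp_add hf hg]
  ring

lemma stepOp_const_mul (σ : ℝ) (c : ℂ) (hf : ContDiffAt ℝ 2 f w) :
    stepOp σ (fun w => c * f w) w = c * stepOp σ f w := by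
  have h : (fun y => Ebarop (fun w => c * f w) y + σ * (c * f y)) =ᶠ[𝓝 w]
      fun y => c * (Ebarop f y + σ * f y) :=
    hf.eventually_differentiableAt.mono fun _ hy => by simp only [Ebarop_const_mul c hy]; ring
  have hf' : DifferentiableAt ℝ (fun y => Ebarop f y + σ * f y) w :=
    hf.differentiableAt_Ebarop.add ((hf.differentiableAt (by norm_num)).const_mul _)
  simp only [stepOp]
  rw [Eop_congr h, Eop_const_mul c hf', Ebarop_const_mul c (hf.differentiableAt (by norm_num)),
    lapOp_const_mul c hf]
  ring

end Operators
section KernelMonomial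

variable {N : ℕ}
local notation "ℂᴺ" => EuclideanSpace ℂ (Fin N)

-- `cauchyFactor ζ` is holomorphic and `conjCauchyFactor ζ` antiholomorphic in `w`.
def defect (w : ℂᴺ) : ℂ := 1 - hinner w w

def cauchyFactor (ζ w : ℂᴺ) : ℂ := 1 - hinner w ζ

def conjCauchyFactor (ζ w : ℂᴺ) : ℂ := 1 - hinner ζ w

lemma hinner_eq_inner (z w : ℂᴺ) : hinner z w = inner ℂ w z := by
  simp only [hinner, PiLp.inner_apply, RCLike.inner_apply]

lemma defect_eq_inner : (defect : ℂᴺ → ℂ) = fun w => 1 - inner ℂ w w := by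
  ext w; rw [defect, hinner_eq_inner]

lemma cauchyFactor_eq_inner (ζ : ℂᴺ) : cauchyFactor ζ = fun w => 1 - inner ℂ ζ w :=
  funext fun w => by rw [cauchyFactor, hinner_eq_inner]

lemma conjCauchyFactor_eq_inner (ζ : ℂᴺ) : conjCauchyFactor ζ = fun w => 1 - inner ℂ w ζ :=
  funext fun w => by rw [conjCauchyFactor, hinner_eq_inner]

section

variable (ζ w : EuclideanSpace ℂ (Fin N)) (j : Fin N)

lemma hinner_self_eq_one_sub_defect : hinner w w = 1 - defect w := (sub_sub_cancel 1 _).symm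

lemma hinner_eq_one_sub_cauchyFactor : hinner w ζ = 1 - cauchyFactor ζ w :=
  (sub_sub_cancel 1 _).symm

lemma hinner_eq_one_sub_conjCauchyFactor : hinner ζ w = 1 - conjCauchyFactor ζ w :=
  (sub_sub_cancel 1 _).symm

lemma wdz_defect : wdz j defect w = -conj (w j) := by
  have h : HasFDerivAt (fun w : ℂᴺ => 1 - inner ℂ w w) _ w :=
    ((hasFDerivAt_id w).inner ℂ (hasFDerivAt_id w)).const_sub 1
  rw [defect_eq_inner, h.wdz_eq]
  simp only [neg_apply, ContinuousLinearMap.comp_apply, ContinuousLinearMap.prod_apply,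
    ContinuousLinearMap.id_apply, id_eq, fderivInnerCLM_apply, EuclideanSpace.inner_single_left,
    EuclideanSpace.inner_single_right, map_one, conj_I]
  ring_nf; simp only [I_sq]; ring_nf

lemma wdzbar_defect : wdzbar j defect w = -w j := by
  have h : HasFDerivAt (fun w : ℂᴺ => 1 - inner ℂ w w) _ w :=
    ((hasFDerivAt_id w).inner ℂ (hasFDerivAt_id w)).const_sub 1
  rw [defect_eq_inner, h.wdzbar_eq]
  simp only [neg_apply, ContinuousLinearMap.comp_apply, ContinuousLinearMap.prod_apply,
    ContinuousLinearMap.id_apply, id_eq, fderivInnerCLM_apply, EuclideanSpace.inner_single_left,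
    EuclideanSpace.inner_single_right, map_one, conj_I]
  ring_nf; simp only [I_sq]; ring_nf

lemma wdz_cauchyFactor : wdz j (cauchyFactor ζ) w = -conj (ζ j) := by
  have h : HasFDerivAt (fun w : ℂᴺ => 1 - inner ℂ ζ w) _ w :=
    ((hasFDerivAt_const ζ w).inner ℂ (hasFDerivAt_id w)).const_sub 1
  rw [cauchyFactor_eq_inner, h.wdz_eq]
  simp only [neg_apply, ContinuousLinearMap.comp_apply, ContinuousLinearMap.prod_apply,
    ContinuousLinearMap.id_apply, zero_apply, id_eq, fderivInnerCLM_apply, inner_zero_left,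
    EuclideanSpace.inner_single_right]
  ring_nf; simp only [I_sq]; ring_nf

lemma wdzbar_cauchyFactor : wdzbar j (cauchyFactor ζ) w = 0 := by
  have h : HasFDerivAt (fun w : ℂᴺ => 1 - inner ℂ ζ w) _ w :=
    ((hasFDerivAt_const ζ w).inner ℂ (hasFDerivAt_id w)).const_sub 1
  rw [cauchyFactor_eq_inner, h.wdzbar_eq]
  simp only [neg_apply, ContinuousLinearMap.comp_apply, ContinuousLinearMap.prod_apply,
    ContinuousLinearMap.id_apply, zero_apply, id_eq, fderivInnerCLM_apply, inner_zero_left,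
    EuclideanSpace.inner_single_right]
  ring_nf; simp only [I_sq]; ring_nf

lemma wdz_conjCauchyFactor : wdz j (conjCauchyFactor ζ) w = 0 := by
  have h : HasFDerivAt (fun w : ℂᴺ => 1 - inner ℂ w ζ) _ w :=
    ((hasFDerivAt_id w).inner ℂ (hasFDerivAt_const ζ w)).const_sub 1
  rw [conjCauchyFactor_eq_inner, h.wdz_eq]
  simp only [neg_apply, ContinuousLinearMap.comp_apply, ContinuousLinearMap.prod_apply,
    ContinuousLinearMap.id_apply, zero_apply, id_eq, fderivInnerCLM_apply, inner_zero_right,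
    EuclideanSpace.inner_single_left, map_one, conj_I]
  ring_nf; simp only [I_sq]; ring_nf

lemma wdzbar_conjCauchyFactor : wdzbar j (conjCauchyFactor ζ) w = -ζ j := by
  have h : HasFDerivAt (fun w : ℂᴺ => 1 - inner ℂ w ζ) _ w :=
    ((hasFDerivAt_id w).inner ℂ (hasFDerivAt_const ζ w)).const_sub 1
  rw [conjCauchyFactor_eq_inner, h.wdzbar_eq]
  simp only [neg_apply, ContinuousLinearMap.comp_apply, ContinuousLinearMap.prod_apply,
    ContinuousLinearMap.id_apply, zero_apply, id_eq, fderivInnerCLM_apply, inner_zero_right,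
    EuclideanSpace.inner_single_left, map_one, conj_I]
  ring_nf; simp only [I_sq]; ring_nf

end

def kernelMonomial (ζ : ℂᴺ) (p a b : ℤ) (w : ℂᴺ) : ℂ :=
  defect w ^ p * cauchyFactor ζ w ^ a * conjCauchyFactor ζ w ^ b

variable {ζ w : EuclideanSpace ℂ (Fin N)}

lemma defect_eq_ofReal (w : ℂᴺ) : defect w = ((1 - ‖w‖ ^ 2 : ℝ) : ℂ) := by
  rw [defect, hinner_eq_inner, inner_self_eq_norm_sq_to_K]; push_cast; rfl

lemma defect_ne_zero (hw : w ∈ ball (0 : ℂᴺ) 1) : defect w ≠ 0 := by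
  have : ‖w‖ < 1 := mem_ball_zero_iff.mp hw
  rw [defect_eq_ofReal, Complex.ofReal_ne_zero]
  nlinarith [norm_nonneg w]

lemma norm_hinner_lt_one (hζ : ζ ∈ ball (0 : ℂᴺ) 1) (hw : w ∈ ball (0 : ℂᴺ) 1) :
    ‖hinner ζ w‖ < 1 := by
  rw [mem_ball_zero_iff] at hζ hw
  rw [hinner_eq_inner]
  calc ‖inner ℂ w ζ‖ ≤ ‖w‖ * ‖ζ‖ := norm_inner_le_norm w ζ
    _ < 1 := by nlinarith [norm_nonneg w, norm_nonneg ζ]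

lemma conjCauchyFactor_ne_zero (hζ : ζ ∈ ball (0 : ℂᴺ) 1) (hw : w ∈ ball (0 : ℂᴺ) 1) :
    conjCauchyFactor ζ w ≠ 0 := by
  intro h
  have := norm_hinner_lt_one hζ hw
  rw [conjCauchyFactor, sub_eq_zero] at h
  rw [← h] at this
  simp at this

lemma cauchyFactor_ne_zero (hζ : ζ ∈ ball (0 : ℂᴺ) 1) (hw : w ∈ ball (0 : ℂᴺ) 1) :
    cauchyFactor ζ w ≠ 0 := by
  intro h
  have := norm_hinner_lt_one hw hζ
  rw [cauchyFactor, sub_eq_zero] at h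
  rw [← h] at this
  simp at this

lemma contDiff_defect {n : WithTop ℕ∞} : ContDiff ℝ n (defect : ℂᴺ → ℂ) := by
  rw [defect_eq_inner]; exact contDiff_const.sub (contDiff_id.inner ℂ contDiff_id)

lemma contDiff_cauchyFactor (ζ : ℂᴺ) {n : WithTop ℕ∞} : ContDiff ℝ n (cauchyFactor ζ) := by
  simp only [cauchyFactor_eq_inner]; exact contDiff_const.sub (contDiff_const.inner ℂ contDiff_id)

lemma contDiff_conjCauchyFactor (ζ : ℂᴺ) {n : WithTop ℕ∞} :
    ContDiff ℝ n (conjCauchyFactor ζ) := by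
  simp only [conjCauchyFactor_eq_inner]
  exact contDiff_const.sub (contDiff_id.inner ℂ contDiff_const)

variable (p a b : ℤ)

lemma contDiffAt_kernelMonomial (hζ : ζ ∈ ball (0 : ℂᴺ) 1) (hw : w ∈ ball (0 : ℂᴺ) 1)
    {n : WithTop ℕ∞} : ContDiffAt ℝ n (kernelMonomial ζ p a b) w :=
  ((contDiff_defect.contDiffAt.zpow_of_ne_zero (defect_ne_zero hw) p).mul
    ((contDiff_cauchyFactor ζ).contDiffAt.zpow_of_ne_zero (cauchyFactor_ne_zero hζ hw) a)).mul
    ((contDiff_conjCauchyFactor ζ).contDiffAt.zpow_of_ne_zero (conjCauchyFactor_ne_zero hζ hw) b)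

lemma differentiableAt_kernelMonomial (hζ : ζ ∈ ball (0 : ℂᴺ) 1) (hw : w ∈ ball (0 : ℂᴺ) 1) :
    DifferentiableAt ℝ (kernelMonomial ζ p a b) w :=
  (contDiffAt_kernelMonomial p a b hζ hw (n := 1)).differentiableAt one_ne_zero

lemma wdz_kernelMonomial (hζ : ζ ∈ ball (0 : ℂᴺ) 1) (hw : w ∈ ball (0 : ℂᴺ) 1) (j : Fin N) :
    wdz j (kernelMonomial ζ p a b) w =
      -(p * conj (w j) * kernelMonomial ζ (p - 1) a b w)
        - a * conj (ζ j) * kernelMonomial ζ p (a - 1) b w := by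
  have hX := contDiff_defect.differentiable (n := 1) one_ne_zero w
  have hB := (contDiff_cauchyFactor ζ).differentiable (n := 1) one_ne_zero w
  have hQ := (contDiff_conjCauchyFactor ζ).differentiable (n := 1) one_ne_zero w
  have hX0 := defect_ne_zero hw
  have hB0 := cauchyFactor_ne_zero hζ hw
  have hQ0 := conjCauchyFactor_ne_zero hζ hw
  unfold kernelMonomial
  rw [wdz_mul j ((hX.complex_zpow hX0 p).fun_mul (hB.complex_zpow hB0 a))
      (hQ.complex_zpow hQ0 b),
    wdz_mul j (hX.complex_zpow hX0 p) (hB.complex_zpow hB0 a), wdz_zpow j hX hX0,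
    wdz_zpow j hB hB0, wdz_zpow j hQ hQ0, wdz_defect, wdz_cauchyFactor, wdz_conjCauchyFactor]
  ring

lemma wdzbar_kernelMonomial (hζ : ζ ∈ ball (0 : ℂᴺ) 1) (hw : w ∈ ball (0 : ℂᴺ) 1) (j : Fin N) :
    wdzbar j (kernelMonomial ζ p a b) w =
      -(p * w j * kernelMonomial ζ (p - 1) a b w)
        - b * ζ j * kernelMonomial ζ p a (b - 1) w := by
  have hX := contDiff_defect.differentiable (n := 1) one_ne_zero w
  have hB := (contDiff_cauchyFactor ζ).differentiable (n := 1) one_ne_zero w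
  have hQ := (contDiff_conjCauchyFactor ζ).differentiable (n := 1) one_ne_zero w
  have hX0 := defect_ne_zero hw
  have hB0 := cauchyFactor_ne_zero hζ hw
  have hQ0 := conjCauchyFactor_ne_zero hζ hw
  unfold kernelMonomial
  rw [wdzbar_mul j ((hX.complex_zpow hX0 p).fun_mul (hB.complex_zpow hB0 a))
      (hQ.complex_zpow hQ0 b),
    wdzbar_mul j (hX.complex_zpow hX0 p) (hB.complex_zpow hB0 a), wdzbar_zpow j hX hX0,
    wdzbar_zpow j hB hB0, wdzbar_zpow j hQ hQ0, wdzbar_defect, wdzbar_cauchyFactor,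
    wdzbar_conjCauchyFactor]
  ring

lemma defect_mul_kernelMonomial (hw : w ∈ ball (0 : ℂᴺ) 1) :
    defect w * kernelMonomial ζ (p - 1) a b w = kernelMonomial ζ p a b w := by
  simp only [kernelMonomial, zpow_sub_one₀ (defect_ne_zero hw)]
  field_simp [defect_ne_zero hw]

lemma cauchyFactor_mul_kernelMonomial (hζ : ζ ∈ ball (0 : ℂᴺ) 1) (hw : w ∈ ball (0 : ℂᴺ) 1) :
    cauchyFactor ζ w * kernelMonomial ζ p (a - 1) b w = kernelMonomial ζ p a b w := by
  simp only [kernelMonomial, zpow_sub_one₀ (cauchyFactor_ne_zero hζ hw)]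
  field_simp [cauchyFactor_ne_zero hζ hw]

lemma conjCauchyFactor_mul_kernelMonomial (hζ : ζ ∈ ball (0 : ℂᴺ) 1)
    (hw : w ∈ ball (0 : ℂᴺ) 1) :
    conjCauchyFactor ζ w * kernelMonomial ζ p a (b - 1) w = kernelMonomial ζ p a b w := by
  simp only [kernelMonomial, zpow_sub_one₀ (conjCauchyFactor_ne_zero hζ hw)]
  field_simp [conjCauchyFactor_ne_zero hζ hw]

lemma Eop_kernelMonomial (hζ : ζ ∈ ball (0 : ℂᴺ) 1) (hw : w ∈ ball (0 : ℂᴺ) 1) :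
    Eop (kernelMonomial ζ p a b) w = (p + a) * kernelMonomial ζ p a b w
      - p * kernelMonomial ζ (p - 1) a b w - a * kernelMonomial ζ p (a - 1) b w := by
  have h : Eop (kernelMonomial ζ p a b) w = -(p * hinner w w * kernelMonomial ζ (p - 1) a b w)
      - a * hinner w ζ * kernelMonomial ζ p (a - 1) b w := by
    simp only [Eop, wdz_kernelMonomial p a b hζ hw, hinner, Finset.sum_mul, Finset.mul_sum,
      ← Finset.sum_neg_distrib, ← Finset.sum_sub_distrib]
    exact Finset.sum_congr rfl fun j _ => by ring
  rw [h, hinner_self_eq_one_sub_defect, hinner_eq_one_sub_cauchyFactor]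
  linear_combination p * defect_mul_kernelMonomial p a b hw
    + a * cauchyFactor_mul_kernelMonomial p a b hζ hw

lemma Ebarop_kernelMonomial (hζ : ζ ∈ ball (0 : ℂᴺ) 1) (hw : w ∈ ball (0 : ℂᴺ) 1) :
    Ebarop (kernelMonomial ζ p a b) w = (p + b) * kernelMonomial ζ p a b w
      - p * kernelMonomial ζ (p - 1) a b w - b * kernelMonomial ζ p a (b - 1) w := by
  have h : Ebarop (kernelMonomial ζ p a b) w = -(p * hinner w w * kernelMonomial ζ (p - 1) a b w)
      - b * hinner ζ w * kernelMonomial ζ p a (b - 1) w := by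
    simp only [Ebarop, wdzbar_kernelMonomial p a b hζ hw, hinner, Finset.sum_mul, Finset.mul_sum,
      ← Finset.sum_neg_distrib, ← Finset.sum_sub_distrib]
    exact Finset.sum_congr rfl fun j _ => by ring
  rw [h, hinner_self_eq_one_sub_defect, hinner_eq_one_sub_conjCauchyFactor]
  linear_combination p * defect_mul_kernelMonomial p a b hw
    + b * conjCauchyFactor_mul_kernelMonomial p a b hζ hw

lemma lapOp_kernelMonomial (hζ : ζ ∈ ball (0 : ℂᴺ) 1) (hw : w ∈ ball (0 : ℂᴺ) 1) :
    lapOp (kernelMonomial ζ p a b) w =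
      p * (p - 1) * hinner w w * kernelMonomial ζ (p - 2) a b w
        + p * a * hinner w ζ * kernelMonomial ζ (p - 1) (a - 1) b w
        + p * b * hinner ζ w * kernelMonomial ζ (p - 1) a (b - 1) w
        + a * b * hinner ζ ζ * kernelMonomial ζ p (a - 1) (b - 1) w
        - p * N * kernelMonomial ζ (p - 1) a b w := by
  have hM : ∀ p a b, DifferentiableAt ℝ (kernelMonomial ζ p a b) w :=
    fun p a b => differentiableAt_kernelMonomial p a b hζ hw
  have hwdz : ∀ j, wdz j (wdzbar j (kernelMonomial ζ p a b)) w =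
      p * (p - 1) * kernelMonomial ζ (p - 2) a b w * (w j * conj (w j))
        + p * a * kernelMonomial ζ (p - 1) (a - 1) b w * (w j * conj (ζ j))
        + p * b * kernelMonomial ζ (p - 1) a (b - 1) w * (ζ j * conj (w j))
        + a * b * kernelMonomial ζ p (a - 1) (b - 1) w * (ζ j * conj (ζ j))
        - p * kernelMonomial ζ (p - 1) a b w := fun j => by
    have h : wdzbar j (kernelMonomial ζ p a b) =ᶠ[𝓝 w] fun y =>
        (-p : ℂ) * (y j * kernelMonomial ζ (p - 1) a b y)
          + (-(b * ζ j)) * kernelMonomial ζ p a (b - 1) y :=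
      eventually_of_mem (isOpen_ball.mem_nhds hw) fun y hy => by
        rw [wdzbar_kernelMonomial p a b hζ hy]; ring
    have hcoord : DifferentiableAt ℝ (fun y : ℂᴺ => y j) w := by fun_prop
    rw [wdz_congr j h, wdz_add j ((hcoord.fun_mul (hM _ _ _)).const_mul _)
      ((hM _ _ _).const_mul _), wdz_const_mul j _ (hcoord.fun_mul (hM _ _ _)),
      wdz_const_mul j _ (hM _ _ _), wdz_mul j hcoord (hM _ _ _), wdz_coord,
      wdz_kernelMonomial _ _ _ hζ hw, wdz_kernelMonomial _ _ _ hζ hw,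
      show p - 1 - 1 = p - 2 by ring]
    push_cast
    ring
  simp only [lapOp, hwdz, Finset.sum_sub_distrib, Finset.sum_add_distrib, ← Finset.mul_sum,
    Finset.sum_const, Finset.card_univ, Fintype.card_fin, nsmul_eq_mul, hinner]
  ring

lemma stepOp_kernelMonomial (σ : ℝ) (hζ : ζ ∈ ball (0 : ℂᴺ) 1) (hw : w ∈ ball (0 : ℂᴺ) 1) :
    stepOp σ (kernelMonomial ζ p a b) w =
      (p + a + σ) * (p + b + σ) * kernelMonomial ζ p a b w
        - a * (p + b + σ) * kernelMonomial ζ p (a - 1) b w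
        - b * (p + a + σ) * kernelMonomial ζ p a (b - 1) w
        + a * b * defect ζ * kernelMonomial ζ p (a - 1) (b - 1) w
        + p * (N - p - 2 * σ) * kernelMonomial ζ (p - 1) a b w := by
  have hM : ∀ p a b, DifferentiableAt ℝ (kernelMonomial ζ p a b) w :=
    fun p a b => differentiableAt_kernelMonomial p a b hζ hw
  have h : (fun y => Ebarop (kernelMonomial ζ p a b) y + σ * kernelMonomial ζ p a b y) =ᶠ[𝓝 w]
      fun y => (p + b + σ : ℂ) * kernelMonomial ζ p a b y
        + ((-p : ℂ) * kernelMonomial ζ (p - 1) a b y + (-b : ℂ) * kernelMonomial ζ p a (b - 1) y) :=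
    eventually_of_mem (isOpen_ball.mem_nhds hw) fun y hy => by
      simp only [Ebarop_kernelMonomial p a b hζ hy]; ring
  simp only [stepOp]
  rw [Eop_congr h, Eop_add ((hM _ _ _).const_mul _)
      (((hM _ _ _).const_mul _).fun_add ((hM _ _ _).const_mul _)),
    Eop_add ((hM _ _ _).const_mul _) ((hM _ _ _).const_mul _),
    Eop_const_mul _ (hM _ _ _), Eop_const_mul _ (hM _ _ _), Eop_const_mul _ (hM _ _ _),
    Eop_kernelMonomial _ _ _ hζ hw, Eop_kernelMonomial _ _ _ hζ hw, Eop_kernelMonomial _ _ _ hζ hw,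
    Ebarop_kernelMonomial _ _ _ hζ hw, lapOp_kernelMonomial _ _ _ hζ hw,
    show p - 1 - 1 = p - 2 by ring, hinner_self_eq_one_sub_defect,
    hinner_self_eq_one_sub_defect, hinner_eq_one_sub_cauchyFactor,
    hinner_eq_one_sub_conjCauchyFactor]
  have h₁ : defect w * kernelMonomial ζ (p - 2) a b w = kernelMonomial ζ (p - 1) a b w := by
    rw [← defect_mul_kernelMonomial (p - 1) a b hw, show p - 1 - 1 = p - 2 by ring]
  push_cast
  linear_combination (p * (p - 1) : ℂ) * h₁
    + (p * a : ℂ) * cauchyFactor_mul_kernelMonomial (p - 1) a b hζ hw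
    + (p * b : ℂ) * conjCauchyFactor_mul_kernelMonomial (p - 1) a b hζ hw

end KernelMonomial

section Kernel

variable {N : ℕ}
local notation "ℂᴺ" => EuclideanSpace ℂ (Fin N)

lemma conj_conjCauchyFactor (ζ w : ℂᴺ) : conj (conjCauchyFactor ζ w) = cauchyFactor ζ w := by
  rw [conjCauchyFactor, cauchyFactor, map_sub, map_one, hinner_eq_inner, hinner_eq_inner,
    inner_conj_symm]

lemma ofReal_norm_sq_conjCauchyFactor (ζ w : ℂᴺ) :
    ((‖conjCauchyFactor ζ w‖ ^ 2 : ℝ) : ℂ) = cauchyFactor ζ w * conjCauchyFactor ζ w := by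
  rw [← conj_conjCauchyFactor, mul_comm, Complex.mul_conj']; push_cast; rfl

lemma kernel_eq_kernelMonomial (z w : ℂᴺ) :
    ((1 - ‖w‖ ^ 2 : ℝ) : ℂ) / ((‖1 - hinner z w‖ ^ 2 : ℝ) : ℂ)
      = kernelMonomial z 1 (-1) (-1) w := by
  rw [← conjCauchyFactor, ofReal_norm_sq_conjCauchyFactor, ← defect_eq_ofReal, kernelMonomial]
  simp only [zpow_one, zpow_neg]
  field_simp

lemma weightedKernel_eq_kernelMonomial (n : ℕ) (ζ w : ℂᴺ) :
    (((1 - ‖w‖ ^ 2) ^ n : ℝ) : ℂ) / ((‖1 - hinner w ζ‖ ^ (2 * n) : ℝ) : ℂ)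
      = kernelMonomial ζ n (-n) (-n) w := by
  rw [← cauchyFactor, ← conj_conjCauchyFactor, Complex.norm_conj, pow_mul, Complex.ofReal_pow,
    Complex.ofReal_pow, ofReal_norm_sq_conjCauchyFactor, ← defect_eq_ofReal, kernelMonomial]
  simp only [zpow_natCast, zpow_neg, mul_pow]
  field_simp

lemma iterOp_kernel {z : ℂᴺ} (hz : z ∈ ball (0 : ℂᴺ) 1) (m : ℕ) :
    ∀ w ∈ ball (0 : ℂᴺ) 1,
      iterOp m (fun w => ((1 - ‖w‖ ^ 2 : ℝ) : ℂ) / ((‖1 - hinner z w‖ ^ 2 : ℝ) : ℂ)) w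
        = m.factorial * (m + 1).factorial * (N - (m + 1)) * defect z ^ m
            * kernelMonomial z 0 (-m - 1) (-m - 1) w
          + (m + 1).factorial ^ 2 * defect z ^ (m + 1)
            * kernelMonomial z 1 (-m - 2) (-m - 2) w := by
  induction m with
  | zero =>
    intro w hw
    simp only [iterOp, kernel_eq_kernelMonomial]
    rw [stepOp_kernelMonomial _ _ _ _ hz hw]
    norm_num
    ring
  | succ m ih =>
    intro w hw
    have h := eventually_of_mem (isOpen_ball.mem_nhds hw) ih
    simp only [iterOp]
    have hM : ∀ p a b, ContDiffAt ℝ 2 (kernelMonomial z p a b) w :=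
      fun p a b => contDiffAt_kernelMonomial p a b hz hw
    rw [stepOp_congr _ h, stepOp_add _ (contDiffAt_const.mul (hM _ _ _))
      (contDiffAt_const.mul (hM _ _ _)), stepOp_const_mul _ _ (hM _ _ _),
      stepOp_const_mul _ _ (hM _ _ _), stepOp_kernelMonomial _ _ _ _ hz hw,
      stepOp_kernelMonomial _ _ _ _ hz hw]
    push_cast [Nat.factorial_succ]
    ring_nf

end Kernel

theorem stmt1_general {N : ℕ} (m : ℕ)
    (z ξ : EuclideanSpace ℂ (Fin N))
    (hz : z ∈ ball (0 : EuclideanSpace ℂ (Fin N)) 1)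
    (hξ : ξ ∈ ball (0 : EuclideanSpace ℂ (Fin N)) 1) :
    iterOp m (fun w =>
        ((1 - ‖w‖ ^ 2 : ℝ) : ℂ) / ((‖1 - hinner z w‖ ^ 2 : ℝ) : ℂ)) ξ
      = (Eop (Ebarop (fun w =>
            ((m.factorial : ℂ) ^ 2 * (((1 - ‖w‖ ^ 2) ^ (m + 1) : ℝ) : ℂ))
              / ((‖1 - hinner w ξ‖ ^ (2 * (m + 1)) : ℝ) : ℂ))) z
          - lapOp (fun w =>
            ((m.factorial : ℂ) ^ 2 * (((1 - ‖w‖ ^ 2) ^ (m + 1) : ℝ) : ℂ))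
              / ((‖1 - hinner w ξ‖ ^ (2 * (m + 1)) : ℝ) : ℂ)) z) := by
  simp only [← stepOp_zero, mul_div_assoc, weightedKernel_eq_kernelMonomial]
  rw [iterOp_kernel hz m ξ hξ, stepOp_const_mul _ _ (contDiffAt_kernelMonomial _ _ _ hξ hz),
    stepOp_kernelMonomial _ _ _ _ hξ hz]
  simp only [kernelMonomial, cauchyFactor, conjCauchyFactor, Nat.cast_succ, add_sub_cancel_right,
    zpow_add_one₀ (defect_ne_zero hz), zpow_natCast, zpow_zero, zpow_one]
  push_cast [Nat.factorial_succ]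
  ring_nf

/-- Lemma 2.1, identity (2.2). -/
theorem stmt1 {N : ℕ} (hN : 1 ≤ N) (m : ℕ) (hm : 1 ≤ m)
    (z ξ : EuclideanSpace ℂ (Fin N))
    (hz : z ∈ ball (0 : EuclideanSpace ℂ (Fin N)) 1)
    (hξ : ξ ∈ ball (0 : EuclideanSpace ℂ (Fin N)) 1) :
    iterOp m (fun w =>
        ((1 - ‖w‖ ^ 2 : ℝ) : ℂ) / ((‖1 - hinner z w‖ ^ 2 : ℝ) : ℂ)) ξ
      = (Eop (Ebarop (fun w =>
            ((m.factorial : ℂ) ^ 2 * (((1 - ‖w‖ ^ 2) ^ (m + 1) : ℝ) : ℂ))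
              / ((‖1 - hinner w ξ‖ ^ (2 * (m + 1)) : ℝ) : ℂ))) z
          - lapOp (fun w =>
            ((m.factorial : ℂ) ^ 2 * (((1 - ‖w‖ ^ 2) ^ (m + 1) : ℝ) : ℂ))
              / ((‖1 - hinner w ξ‖ ^ (2 * (m + 1)) : ℝ) : ℂ)) z) :=
  stmt1_general m z ξ hz hξ

end
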